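/- arXiv:2008.08846 — 5 statements merged into one kernel-verified Lean document; each statement's English description precedes it below -/
import Mathlib

section
/- Assume μ ≠ 0. Then the spectrum of T̃₀ equals the closed interval [V₀ − 2μ, V₀ + 2μ]. -/
open MeasureTheory Filter Topology ComplexConjugate ContinuousLinearMap
open scoped ENNReal Real

noncomputable section

/-- `𝒦̃ = ℓ²(ℤⁿ; ℂ)`. -/
abbrev Kt (n : ℕ) := lp (fun _ : (Fin n → ℤ) => ℂ) 2

/-- `𝒦 = ℓ²(ℤⁿ∖{0}; ℂ)`. -/
abbrev Ks (n : ℕ) := lp (fun _ : {x : Fin n → ℤ // x ≠ 0} => ℂ) 2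

/-- `L` is the family of shift operators: `(L_j ψ)(x) = ψ(x + e_j)`. -/
def IsShift {n : ℕ} (L : Fin n → (Kt n →L[ℂ] Kt n)) : Prop :=
  ∀ (j : Fin n) (ψ : Kt n) (x : Fin n → ℤ), (L j ψ) x = ψ (x + Pi.single j 1)

/-- `ι : 𝒦 → 𝒦̃` is extension by zero. -/
def IsIota {n : ℕ} (ι : Ks n →L[ℂ] Kt n) : Prop :=
  ∀ (φ : Ks n) (x : Fin n → ℤ), (ι φ) x = if h : x = 0 then 0 else φ ⟨x, h⟩

/-- The operator `T̃₀ = Σⱼ (μⱼ Lⱼ + conj(μⱼ) Lⱼ*) + V₀ I` on `𝒦̃`. -/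
def T0op {n : ℕ} (μv : Fin n → ℂ) (V₀ : ℝ) (L : Fin n → (Kt n →L[ℂ] Kt n)) :
    Kt n →L[ℂ] Kt n :=
  (∑ j, (μv j • L j + (starRingEnd ℂ) (μv j) • ContinuousLinearMap.adjoint (L j)))
    + (V₀ : ℂ) • ContinuousLinearMap.id ℂ (Kt n)

/-- The operator `T = ι* T̃₀ ι` on `𝒦`. -/
def Tops {n : ℕ} (μv : Fin n → ℂ) (V₀ : ℝ) (L : Fin n → (Kt n →L[ℂ] Kt n))
    (ι : Ks n →L[ℂ] Kt n) : Ks n →L[ℂ] Ks n :=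
  ContinuousLinearMap.adjoint ι ∘L T0op μv V₀ L ∘L ι

/-- `e_j` as an element of `ℤⁿ∖{0}`. -/
def eV {n : ℕ} (j : Fin n) : {x : Fin n → ℤ // x ≠ 0} :=
  ⟨Pi.single j 1, by intro h; have := congrFun h j; simp at this⟩

/-- `-e_j` as an element of `ℤⁿ∖{0}`. -/
def eV' {n : ℕ} (j : Fin n) : {x : Fin n → ℤ // x ≠ 0} :=
  ⟨-Pi.single j 1, by intro h; have := congrFun h j; simp at this⟩

/-!
The shifts `L j` are unitary, so `T̃₀` is self-adjoint and `‖T̃₀ - V₀‖ ≤ 2μ`; hence its spectrum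
is real and lies within `2μ` of `V₀`.

Conversely write `t = V₀ + 2μ cos β` and take the phases `θ j = β - arg μ_j`, so that
`μ_j e^{iθ_j} = |μ_j| e^{iβ}`. The plane wave `x ↦ e^{i⟨θ, x⟩}` then solves `T̃₀ φ = t φ`
pointwise, though it is not square-summable. Cut off to the box `[0, N]ⁿ` it becomes a Weyl
vector: the cut-off only produces errors on the boundary layer of the box, so the relative error
is `O(N^{-1/2})`, `T̃₀ - t` is not bounded below, and `t` lies in the spectrum.
-/

theorem mem_spectrum_of_approx_eigenvectors {𝕜 E : Type*} [NontriviallyNormedField 𝕜]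
    [NormedAddCommGroup E] [NormedSpace 𝕜 E] {T : E →L[𝕜] E} {a : 𝕜}
    (h : ∀ C : ℝ, 0 ≤ C → ∃ x, C * ‖T x - a • x‖ < ‖x‖) : a ∈ spectrum 𝕜 T := by
  rintro ⟨u, hu⟩
  obtain ⟨x, hx⟩ := h ‖(↑u⁻¹ : E →L[𝕜] E)‖ (norm_nonneg _)
  have hx_eq : x = (↑u⁻¹ : E →L[𝕜] E) (a • x - T x) := by
    have : (↑u : E →L[𝕜] E) x = a • x - T x := by simp [hu, Algebra.algebraMap_eq_smul_one]
    rw [← this]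
    exact congr($(u.inv_mul.symm) x)
  have := (↑u⁻¹ : E →L[𝕜] E).le_opNorm (a • x - T x)
  rw [← hx_eq, norm_sub_rev] at this
  exact this.not_gt hx

theorem IsSelfAdjoint.spectrum_subset_image_Icc {A : Type*} [CStarAlgebra A] [NormOneClass A]
    {a : A} (ha : IsSelfAdjoint a) {r R : ℝ} (h : ‖a - algebraMap ℂ A r‖ ≤ R) :
    spectrum ℂ a ⊆ (↑) '' Set.Icc (r - R) (r + R) := by
  intro z hz
  have hz_sub : z - r ∈ spectrum ℂ (a - algebraMap ℂ A r) := by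
    rw [← spectrum.sub_singleton_eq]
    exact Set.sub_mem_sub hz rfl
  have hdist : ‖z - r‖ ≤ R := (spectrum.norm_le_norm_of_mem hz_sub).trans h
  rw [ha.mem_spectrum_eq_re hz, ← Complex.ofReal_sub, Complex.norm_real, Real.norm_eq_abs,
    abs_le] at hdist
  exact ⟨z.re, ⟨by linarith, by linarith⟩, (ha.mem_spectrum_eq_re hz).symm⟩

theorem lp.norm_sq_eq_sum_of_support {α : Type*} {E : α → Type*} [∀ i, NormedAddCommGroup (E i)]
    (f : lp E 2) (s : Finset α) (hf : ∀ i ∉ s, f i = 0) : ‖f‖ ^ 2 = ∑ i ∈ s, ‖f i‖ ^ 2 := by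
  have h := lp.hasSum_norm (p := 2) (by norm_num) f
  simp only [ENNReal.toReal_ofNat, Real.rpow_two] at h
  exact h.unique (hasSum_sum_of_ne_finset_zero (by simp +contextual [hf]))

instance lp.nontrivial {α : Type*} [Nonempty α] {E : α → Type*} [∀ i, NormedAddCommGroup (E i)]
    [∀ i, Nontrivial (E i)] {p : ℝ≥0∞} : Nontrivial (lp E p) := by
  classical
  obtain ⟨i⟩ := ‹Nonempty α›
  obtain ⟨a, ha⟩ := exists_ne (0 : E i)
  exact ⟨lp.single p i a, 0, fun h => ha (by simpa using congr_arg (· i) h)⟩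

section Shift

variable {G : Type*} [AddGroup G] {A : lp (fun _ : G => ℂ) 2 →L[ℂ] lp (fun _ : G => ℂ) 2} {v : G}

theorem adjoint_shift_apply
    (hA : ∀ (ψ : lp (fun _ : G => ℂ) 2) (x : G), A ψ x = ψ (x + v))
    (ψ : lp (fun _ : G => ℂ) 2) (x : G) : adjoint A ψ x = ψ (x - v) := by
  classical
  have hA_single : A (lp.single 2 x 1) = lp.single 2 (x - v) 1 := by
    ext y
    rw [hA, lp.single_apply, lp.single_apply]
    simp only [Pi.single_apply, eq_sub_iff_add_eq]
  have := adjoint_inner_right A (lp.single 2 x 1) ψ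
  rw [lp.inner_single_left, hA_single, lp.inner_single_left] at this
  simpa using this

theorem shift_mem_unitary (hA : ∀ (ψ : lp (fun _ : G => ℂ) 2) (x : G), A ψ x = ψ (x + v)) :
    A ∈ unitary (lp (fun _ : G => ℂ) 2 →L[ℂ] lp (fun _ : G => ℂ) 2) := by
  constructor <;> ext ψ x <;>
    simp [star_eq_adjoint, adjoint_shift_apply hA, hA]

end Shift

theorem norm_adjoint_apply_sub_conj_smul {H : Type*} [NormedAddCommGroup H] [InnerProductSpace ℂ H]
    [CompleteSpace H] {U : H →L[ℂ] H} (hU : U ∈ unitary (H →L[ℂ] H)) {c : ℂ} (hc : ‖c‖ = 1)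
    (ψ : H) : ‖adjoint U ψ - conj c • ψ‖ = ‖U ψ - c • ψ‖ := by
  have hUU : adjoint U (U ψ) = ψ := by
    simpa [star_eq_adjoint] using congr($(Unitary.star_mul_self_of_mem hU) ψ)
  have : adjoint U ψ - conj c • ψ = -conj c • adjoint U (U ψ - c • ψ) := by
    rw [map_sub, map_smul, hUU, smul_sub, smul_smul, neg_mul, Complex.conj_mul', hc]
    module
  rw [this, norm_smul, norm_neg, Complex.norm_conj, hc, one_mul, ← star_eq_adjoint,
    norm_map_of_mem_unitary (Unitary.star_mem hU)]

section T0op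

variable {n : ℕ} (μv : Fin n → ℂ) (V₀ : ℝ) (L : Fin n → (Kt n →L[ℂ] Kt n))

theorem isSelfAdjoint_T0op : IsSelfAdjoint (T0op μv V₀ L) := by
  unfold IsSelfAdjoint T0op
  simp only [star_add, star_sum, star_smul, star_eq_adjoint, adjoint_adjoint, adjoint_id,
    RCLike.star_def, Complex.conj_conj, Complex.conj_ofReal, add_comm]

variable {μv V₀ L}

theorem norm_T0op_sub_algebraMap_le (hL : ∀ j, L j ∈ unitary (Kt n →L[ℂ] Kt n)) :
    ‖T0op μv V₀ L - algebraMap ℂ _ (V₀ : ℂ)‖ ≤ 2 * ∑ j, ‖μv j‖ := by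
  rw [T0op, Algebra.algebraMap_eq_smul_one, one_def, add_sub_cancel_right, Finset.mul_sum]
  refine (norm_sum_le _ _).trans (Finset.sum_le_sum fun j _ => ?_)
  have hLj : ‖L j‖ = 1 := CStarRing.norm_of_mem_unitary (hL j)
  calc ‖μv j • L j + conj (μv j) • adjoint (L j)‖
      ≤ ‖μv j • L j‖ + ‖conj (μv j) • adjoint (L j)‖ := norm_add_le _ _
    _ = 2 * ‖μv j‖ := by
      rw [norm_smul, norm_smul, Complex.norm_conj, LinearIsometryEquiv.norm_map, hLj]
      ring

theorem T0op_apply_sub_smul {c : Fin n → ℂ} {t : ℂ}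
    (ht : t = V₀ + ∑ j, (μv j * c j + conj (μv j) * conj (c j))) (ψ : Kt n) :
    T0op μv V₀ L ψ - t • ψ
      = ∑ j, (μv j • (L j ψ - c j • ψ) + conj (μv j) • (adjoint (L j) ψ - conj (c j) • ψ)) := by
  have hterm : ∀ j, μv j • (L j ψ - c j • ψ) + conj (μv j) • (adjoint (L j) ψ - conj (c j) • ψ)
      = (μv j • L j ψ + conj (μv j) • adjoint (L j) ψ)
        - (μv j * c j + conj (μv j) * conj (c j)) • ψ := fun j => by module
  simp only [hterm, Finset.sum_sub_distrib, ← Finset.sum_smul, ht, T0op, add_apply, sum_apply,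
    smul_apply, id_apply]
  module

theorem norm_T0op_apply_sub_smul_le (hL : ∀ j, L j ∈ unitary (Kt n →L[ℂ] Kt n))
    {c : Fin n → ℂ} (hc : ∀ j, ‖c j‖ = 1) {t : ℂ}
    (ht : t = V₀ + ∑ j, (μv j * c j + conj (μv j) * conj (c j))) (ψ : Kt n) :
    ‖T0op μv V₀ L ψ - t • ψ‖ ≤ 2 * ∑ j, ‖μv j‖ * ‖L j ψ - c j • ψ‖ := by
  rw [T0op_apply_sub_smul ht, Finset.mul_sum]
  refine (norm_sum_le _ _).trans (Finset.sum_le_sum fun j _ => ?_)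
  refine (norm_add_le _ _).trans (le_of_eq ?_)
  rw [norm_smul, norm_smul, Complex.norm_conj, norm_adjoint_apply_sub_conj_smul (hL j) (hc j)]
  ring

end T0op

section WavePacket

variable {ι : Type*} [Fintype ι] [DecidableEq ι]

def box (N : ℕ) : Finset (ι → ℤ) :=
  Fintype.piFinset fun _ => Finset.Icc 0 (N : ℤ)

def boxBoundary (N : ℕ) (j : ι) : Finset (ι → ℤ) :=
  Fintype.piFinset (Function.update (fun _ => Finset.Icc 0 (N : ℤ)) j {-1, (N : ℤ)})

theorem card_boxBoundary_mul (N : ℕ) (j : ι) :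
    (boxBoundary N j).card * (N + 1) = 2 * (box (ι := ι) N).card := by
  have hcard : ∀ i, (Function.update (fun _ => Finset.Icc 0 (N : ℤ)) j {-1, (N : ℤ)} i).card
      = Function.update (fun _ => N + 1) j 2 i := by
    intro i
    rcases eq_or_ne i j with rfl | hij
    · simp
    · simp [hij]
  rw [boxBoundary, box, Fintype.card_piFinset, Fintype.card_piFinset, Finset.prod_congr rfl
    fun i _ => hcard i, Finset.prod_update_of_mem (Finset.mem_univ j),
    ← Finset.mul_prod_erase _ _ (Finset.mem_univ j), Finset.sdiff_singleton_eq_erase]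
  simp only [Int.card_Icc, sub_zero, Int.toNat_natCast_add_one, Finset.prod_const]
  ring

theorem add_single_mem_box_iff {N : ℕ} {j : ι} {x : ι → ℤ} (hx : x ∉ boxBoundary N j) :
    x + Pi.single j 1 ∈ box N ↔ x ∈ box N := by
  simp only [boxBoundary, box, Fintype.mem_piFinset, not_forall] at hx ⊢
  obtain ⟨k, hk⟩ := hx
  rcases eq_or_ne k j with rfl | hkj
  · simp only [Function.update_self, Finset.mem_insert, Finset.mem_singleton, not_or] at hk
    refine forall_congr' fun a => ?_
    rcases eq_or_ne a k with rfl | hak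
    · simp only [Pi.add_apply, Pi.single_eq_same, Finset.mem_Icc]
      omega
    · simp [hak]
  · simp only [Function.update_of_ne hkj] at hk
    exact iff_of_false (fun h => hk (by simpa [hkj] using h k)) (fun h => hk (h k))

def planeWave (θ : ι → ℝ) (x : ι → ℤ) : Circle :=
  Circle.exp (∑ k, θ k * x k)

theorem planeWave_add_single (θ : ι → ℝ) (x : ι → ℤ) (j : ι) :
    planeWave θ (x + Pi.single j 1) = Circle.exp (θ j) * planeWave θ x := by
  rw [planeWave, planeWave, ← Circle.exp_add]
  congr 1
  simp [Pi.single_apply, mul_add, Finset.sum_add_distrib, add_comm]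

def wavePacket (θ : ι → ℝ) (N : ℕ) : lp (fun _ : ι → ℤ => ℂ) 2 :=
  ⟨fun x => if x ∈ box N then (planeWave θ x : ℂ) else 0,
    (memℓp_zero ((box N).finite_toSet.subset fun x hx => by by_contra h; simp_all)).of_exponent_ge
      (by norm_num)⟩

theorem wavePacket_apply (θ : ι → ℝ) (N : ℕ) (x : ι → ℤ) :
    wavePacket θ N x = if x ∈ box N then (planeWave θ x : ℂ) else 0 := rfl

theorem norm_wavePacket_sq (θ : ι → ℝ) (N : ℕ) : ‖wavePacket θ N‖ ^ 2 = (box (ι := ι) N).card := by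
  rw [lp.norm_sq_eq_sum_of_support _ (box N) fun x hx => by simp [wavePacket_apply, hx]]
  simp +contextual [wavePacket_apply, Circle.norm_coe]

theorem norm_shift_wavePacket_sub_sq_mul_le
    {A : lp (fun _ : ι → ℤ => ℂ) 2 →L[ℂ] lp (fun _ : ι → ℤ => ℂ) 2} {j : ι}
    (hA : ∀ (ψ : lp (fun _ : ι → ℤ => ℂ) 2) (x : ι → ℤ), A ψ x = ψ (x + Pi.single j 1))
    (θ : ι → ℝ) (N : ℕ) :
    ‖A (wavePacket θ N) - (Circle.exp (θ j) : ℂ) • wavePacket θ N‖ ^ 2 * (N + 1)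
      ≤ 2 * ‖wavePacket θ N‖ ^ 2 := by
  set ψ := wavePacket θ N
  have hvanish : ∀ x ∉ boxBoundary N j, (A ψ - (Circle.exp (θ j) : ℂ) • ψ) x = 0 := by
    intro x hx
    simp only [lp.coeFn_sub, lp.coeFn_smul, Pi.sub_apply, Pi.smul_apply, hA, ψ, wavePacket_apply,
      add_single_mem_box_iff hx, planeWave_add_single]
    split_ifs <;> simp
  have hle_one : ∀ x, ‖(A ψ - (Circle.exp (θ j) : ℂ) • ψ) x‖ ≤ 1 := by
    intro x
    simp only [lp.coeFn_sub, lp.coeFn_smul, Pi.sub_apply, Pi.smul_apply, hA, ψ, wavePacket_apply,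
      planeWave_add_single]
    split_ifs <;> simp [Circle.norm_coe]
  calc ‖A ψ - (Circle.exp (θ j) : ℂ) • ψ‖ ^ 2 * (N + 1)
      = (∑ x ∈ boxBoundary N j, ‖(A ψ - (Circle.exp (θ j) : ℂ) • ψ) x‖ ^ 2) * (N + 1) := by
        rw [lp.norm_sq_eq_sum_of_support _ _ hvanish]
    _ ≤ (boxBoundary N j).card * (N + 1) := by
        gcongr
        exact (Finset.sum_le_sum fun x _ => pow_le_one₀ (norm_nonneg _) (hle_one x)).trans
          (by simp)
    _ = 2 * ‖ψ‖ ^ 2 := by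
        rw [norm_wavePacket_sq]
        exact_mod_cast card_boxBoundary_mul N j

theorem norm_shift_wavePacket_sub_mul_sqrt_le
    {A : lp (fun _ : ι → ℤ => ℂ) 2 →L[ℂ] lp (fun _ : ι → ℤ => ℂ) 2} {j : ι}
    (hA : ∀ (ψ : lp (fun _ : ι → ℤ => ℂ) 2) (x : ι → ℤ), A ψ x = ψ (x + Pi.single j 1))
    (θ : ι → ℝ) (N : ℕ) :
    ‖A (wavePacket θ N) - (Circle.exp (θ j) : ℂ) • wavePacket θ N‖ * √(N + 1)
      ≤ √2 * ‖wavePacket θ N‖ := by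
  rw [← pow_le_pow_iff_left₀ (by positivity) (by positivity) two_ne_zero, mul_pow, mul_pow,
    Real.sq_sqrt (by positivity), Real.sq_sqrt zero_le_two]
  exact norm_shift_wavePacket_sub_sq_mul_le hA θ N

end WavePacket

theorem mul_circleExp_sub_arg (z : ℂ) (β : ℝ) :
    z * Circle.exp (β - z.arg) = ‖z‖ * Complex.exp (β * Complex.I) := by
  rw [Circle.coe_exp]
  nth_rw 1 [← Complex.norm_mul_exp_arg_mul_I z]
  rw [mul_assoc, ← Complex.exp_add]
  push_cast
  ring_nf

theorem mul_circleExp_sub_arg_add_conj (z : ℂ) (β : ℝ) :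
    z * Circle.exp (β - z.arg) + conj z * conj (Circle.exp (β - z.arg) : ℂ)
      = ((2 * ‖z‖ * Real.cos β : ℝ) : ℂ) := by
  rw [← map_mul, mul_circleExp_sub_arg, Complex.add_conj, Complex.re_ofReal_mul,
    Complex.exp_ofReal_mul_I_re]
  push_cast
  ring

theorem exists_mul_cos_eq {R s : ℝ} (h : |s| ≤ R) : ∃ β, R * Real.cos β = s := by
  rcases ((abs_nonneg s).trans h).eq_or_lt with rfl | hR
  · exact ⟨0, by simp [abs_nonpos_iff.mp h]⟩
  · obtain ⟨h₁, h₂⟩ := abs_le.mp h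
    refine ⟨Real.arccos (s / R), ?_⟩
    rw [Real.cos_arccos (by rw [le_div_iff₀ hR]; linarith) (by rw [div_le_one hR]; linarith),
      mul_div_cancel₀ _ hR.ne']

section Spectrum

variable {n : ℕ} {μv : Fin n → ℂ} {V₀ : ℝ} {L : Fin n → (Kt n →L[ℂ] Kt n)}

theorem norm_T0op_wavePacket_sub_mul_sqrt_le (hL : IsShift L) {θ : Fin n → ℝ} {t : ℂ}
    (ht : t = V₀ + ∑ j, (μv j * Circle.exp (θ j) + conj (μv j) * conj (Circle.exp (θ j) : ℂ)))
    (N : ℕ) :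
    ‖T0op μv V₀ L (wavePacket θ N) - t • wavePacket θ N‖ * √(N + 1)
      ≤ 2 * √2 * (∑ j, ‖μv j‖) * ‖wavePacket θ N‖ := by
  set ψ := wavePacket θ N
  calc ‖T0op μv V₀ L ψ - t • ψ‖ * √(N + 1)
      ≤ (2 * ∑ j, ‖μv j‖ * ‖L j ψ - (Circle.exp (θ j) : ℂ) • ψ‖) * √(N + 1) := by
        gcongr
        exact norm_T0op_apply_sub_smul_le (fun j => shift_mem_unitary (hL j))
          (fun j => Circle.norm_coe _) ht ψ
    _ = 2 * ∑ j, ‖μv j‖ * (‖L j ψ - (Circle.exp (θ j) : ℂ) • ψ‖ * √(N + 1)) := by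
        simp only [mul_assoc, Finset.sum_mul]
    _ ≤ 2 * ∑ j, ‖μv j‖ * (√2 * ‖ψ‖) := by
        gcongr 2 * ∑ j, _ * ?_ with j
        exact norm_shift_wavePacket_sub_mul_sqrt_le (hL j) θ N
    _ = 2 * √2 * (∑ j, ‖μv j‖) * ‖ψ‖ := by
        rw [← Finset.sum_mul]
        ring

theorem ofReal_mem_spectrum_T0op (hL : IsShift L) {t : ℝ}
    (ht : t ∈ Set.Icc (V₀ - 2 * ∑ j, ‖μv j‖) (V₀ + 2 * ∑ j, ‖μv j‖)) :
    (t : ℂ) ∈ spectrum ℂ (T0op μv V₀ L) := by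
  set μ := ∑ j, ‖μv j‖
  obtain ⟨β, hβ⟩ := exists_mul_cos_eq (R := 2 * μ) (s := t - V₀)
    (abs_sub_le_iff.2 ⟨by linarith [ht.2], by linarith [ht.1]⟩)
  set θ : Fin n → ℝ := fun j => β - (μv j).arg
  have ht' : (t : ℂ)
      = V₀ + ∑ j, (μv j * Circle.exp (θ j) + conj (μv j) * conj (Circle.exp (θ j) : ℂ)) := by
    simp only [θ, mul_circleExp_sub_arg_add_conj, ← Complex.ofReal_sum, ← Finset.sum_mul,
      ← Finset.mul_sum]
    exact_mod_cast by linarith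
  refine mem_spectrum_of_approx_eigenvectors fun C hC => ?_
  obtain ⟨N, hN⟩ := exists_nat_gt (8 * (C * μ) ^ 2)
  set ψ := wavePacket θ N
  have hψ : 0 < ‖ψ‖ := norm_pos_iff.2 fun h => by
    simpa [ψ, wavePacket_apply, box] using congr_arg (fun f : Kt n => f 0) h
  have hN' : 2 * √2 * μ * C < √(N + 1) := by
    rw [Real.lt_sqrt (by positivity), mul_pow, mul_pow, mul_pow, Real.sq_sqrt zero_le_two]
    linarith
  refine ⟨ψ, lt_of_mul_lt_mul_right ?_ (Real.sqrt_nonneg (N + 1))⟩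
  calc C * ‖T0op μv V₀ L ψ - (t : ℂ) • ψ‖ * √(N + 1)
      ≤ C * (2 * √2 * μ * ‖ψ‖) := by
        rw [mul_assoc]
        exact mul_le_mul_of_nonneg_left (norm_T0op_wavePacket_sub_mul_sqrt_le hL ht' N) hC
    _ = 2 * √2 * μ * C * ‖ψ‖ := by ring
    _ < √(N + 1) * ‖ψ‖ := mul_lt_mul_of_pos_right hN' hψ
    _ = ‖ψ‖ * √(N + 1) := mul_comm _ _

end Spectrum

theorem stmt_4_general (n : ℕ) (μv : Fin n → ℂ) (V₀ : ℝ)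
    (L : Fin n → (Kt n →L[ℂ] Kt n)) (hL : IsShift L) :
    spectrum ℂ (T0op μv V₀ L) =
      (fun t : ℝ => (t : ℂ)) ''
        Set.Icc (V₀ - 2 * ∑ j, ‖μv j‖) (V₀ + 2 * ∑ j, ‖μv j‖) := by
  refine subset_antisymm ?_ fun _ ⟨t, ht, hz⟩ => hz ▸ ofReal_mem_spectrum_T0op hL ht
  exact (isSelfAdjoint_T0op μv V₀ L).spectrum_subset_image_Icc
    (norm_T0op_sub_algebraMap_le fun j => shift_mem_unitary (hL j))

/-- if `μ ≠ 0` then `σ(T̃₀) = [V₀ - 2μ, V₀ + 2μ]`. -/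
theorem stmt_4 (n : ℕ) (hn : 1 ≤ n) (μv : Fin n → ℂ) (V₀ : ℝ)
    (hμ : (∑ j, ‖μv j‖) ≠ 0)
    (L : Fin n → (Kt n →L[ℂ] Kt n)) (hL : IsShift L) :
    spectrum ℂ (T0op μv V₀ L) =
      (fun t : ℝ => (t : ℂ)) ''
        Set.Icc (V₀ - 2 * ∑ j, ‖μv j‖) (V₀ + 2 * ∑ j, ‖μv j‖) :=
  stmt_4_general n μv V₀ L hL
end
end

section
/- Let λ ∈ ℝ and suppose (ψ_m) is a sequence in 𝒦̃ with ‖ψ_m‖ = 1 for all m, ⟨ψ, ψ_m⟩ → 0 for every ψ ∈ 𝒦̃, and ‖(T̃₀ − λ)ψ_m‖ → 0. Then there exists a sequence (φ_m) in 𝒦 with ‖φ_m‖ = 1 for all m, ⟨φ, φ_m⟩ → 0 for every φ ∈ 𝒦, and ‖(T − λ)φ_m‖ → 0. (One may take, for all large m, φ_m = ι*ψ_m / √(1 − |ψ_m(0)|²).) -/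
/-!
Since `ι ι*` is the projection onto the functions vanishing at the single site `0`,
`ι ι* ψ_m - ψ_m = -ψ_m(0) δ₀ → 0` by weak nullity. Hence
`(ι* T̃₀ ι - λ) ι* ψ_m = ι* (T̃₀ - λ) ψ_m + ι* T̃₀ (ι ι* ψ_m - ψ_m) → 0`,
`‖ι* ψ_m‖² = ⟨ι ι* ψ_m, ψ_m⟩ → 1`, and `⟨φ, ι* ψ_m⟩ = ⟨ι φ, ψ_m⟩ → 0`;
normalizing `ι* ψ_m` gives the required sequence.
-/

open MeasureTheory Filter Topology ComplexConjugate ContinuousLinearMap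
open scoped ENNReal Real

noncomputable section

open scoped InnerProductSpace

section Compression

variable {𝕜 E F : Type*} [RCLike 𝕜]
  [NormedAddCommGroup E] [InnerProductSpace 𝕜 E]
  [NormedAddCommGroup F] [InnerProductSpace 𝕜 F]

def IsSingularWeylSeq (A : E →L[𝕜] E) (c : 𝕜) (ψ : ℕ → E) : Prop :=
  (∀ m, ‖ψ m‖ = 1) ∧ (∀ χ, Tendsto (fun m => ⟪χ, ψ m⟫_𝕜) atTop (𝓝 0)) ∧
    Tendsto (fun m => A (ψ m) - c • ψ m) atTop (𝓝 0)

theorem exists_isSingularWeylSeq_of_tendsto_norm {A : F →L[𝕜] F} {c : 𝕜} {v : ℕ → F}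
    (hnorm : Tendsto (fun m => ‖v m‖) atTop (𝓝 1))
    (hweak : ∀ χ, Tendsto (fun m => ⟪χ, v m⟫_𝕜) atTop (𝓝 0))
    (hWeyl : Tendsto (fun m => A (v m) - c • v m) atTop (𝓝 0)) :
    ∃ φ, IsSingularWeylSeq A c φ := by
  -- reindexing by `max m N` discards the finitely many `m` where `v m` may vanish
  obtain ⟨N, hN⟩ := eventually_atTop.1 (hnorm.eventually_ne one_ne_zero)
  have hshift : Tendsto (fun m => max m N) atTop atTop :=
    tendsto_atTop_mono (fun m => le_max_left m N) tendsto_id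
  set w := fun m => v (max m N)
  have hw : ∀ m, w m ≠ 0 := fun m h => hN _ (le_max_right m N) (by simp [w, h])
  have hscale : Tendsto (fun m => (‖w m‖⁻¹ : 𝕜)) atTop (𝓝 1) := by
    have h : Tendsto (fun m => (‖w m‖ : 𝕜)) atTop (𝓝 1) := by
      simpa [Function.comp_def] using
        ((RCLike.continuous_ofReal (K := 𝕜)).tendsto 1).comp (hnorm.comp hshift)
    simpa using h.inv₀ one_ne_zero
  refine ⟨fun m => (‖w m‖⁻¹ : 𝕜) • w m, fun m => norm_smul_inv_norm (hw m), fun χ => ?_, ?_⟩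
  · simpa [inner_smul_right] using hscale.mul ((hweak χ).comp hshift)
  · simpa [smul_sub, smul_comm c] using hscale.smul (hWeyl.comp hshift)

variable [CompleteSpace E] [CompleteSpace F]

theorem abs_norm_adjoint_apply_sq_sub_norm_sq_le (ι : F →L[𝕜] E) (ψ : E) :
    |‖adjoint ι ψ‖ ^ 2 - ‖ψ‖ ^ 2| ≤ ‖ι (adjoint ι ψ) - ψ‖ * ‖ψ‖ := by
  have h : ‖adjoint ι ψ‖ ^ 2 - ‖ψ‖ ^ 2 = RCLike.re ⟪ι (adjoint ι ψ) - ψ, ψ⟫_𝕜 := by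
    rw [inner_sub_left, map_sub, ← adjoint_inner_right, inner_self_eq_norm_sq,
      inner_self_eq_norm_sq]
  rw [h]
  exact (RCLike.abs_re_le_norm _).trans (norm_inner_le_norm _ _)

theorem tendsto_norm_adjoint_apply (ι : F →L[𝕜] E) {ψ : ℕ → E} (hnorm : ∀ m, ‖ψ m‖ = 1)
    (hι : Tendsto (fun m => ι (adjoint ι (ψ m)) - ψ m) atTop (𝓝 0)) :
    Tendsto (fun m => ‖adjoint ι (ψ m)‖) atTop (𝓝 1) := by
  have hsq : Tendsto (fun m => ‖adjoint ι (ψ m)‖ ^ 2) atTop (𝓝 1) := by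
    rw [tendsto_iff_norm_sub_tendsto_zero]
    refine squeeze_zero (fun m => norm_nonneg _) (fun m => ?_)
      (tendsto_zero_iff_norm_tendsto_zero.1 hι)
    simpa [hnorm m] using abs_norm_adjoint_apply_sq_sub_norm_sq_le ι (ψ m)
  simpa [Function.comp_def, Real.sqrt_sq (norm_nonneg _)] using
    (Real.continuous_sqrt.tendsto 1).comp hsq

theorem IsSingularWeylSeq.exists_compression {A : E →L[𝕜] E} {c : 𝕜} {ψ : ℕ → E}
    (hψ : IsSingularWeylSeq A c ψ) (ι : F →L[𝕜] E)
    (hι : Tendsto (fun m => ι (adjoint ι (ψ m)) - ψ m) atTop (𝓝 0)) :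
    ∃ φ, IsSingularWeylSeq (adjoint ι ∘L A ∘L ι) c φ := by
  obtain ⟨hnorm, hweak, hWeyl⟩ := hψ
  refine exists_isSingularWeylSeq_of_tendsto_norm (tendsto_norm_adjoint_apply ι hnorm hι)
    (fun χ => ?_) ?_
  · simpa only [adjoint_inner_right] using hweak (ι χ)
  · have h : Tendsto (fun m => adjoint ι (A (ψ m) - c • ψ m + A (ι (adjoint ι (ψ m)) - ψ m)))
        atTop (𝓝 0) := by
      have hsum := hWeyl.add ((A.continuous.tendsto' 0 0 (map_zero A)).comp hι)
      rw [add_zero] at hsum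
      exact ((adjoint ι).continuous.tendsto' 0 0 (map_zero _)).comp hsum
    refine h.congr fun m => ?_
    simp only [map_add, map_sub, map_smul, comp_apply]
    abel

end Compression

namespace IsIota

variable {n : ℕ} {ι : Ks n →L[ℂ] Kt n}

theorem apply_single (hι : IsIota ι) (y : {x : Fin n → ℤ // x ≠ 0}) :
    ι (lp.single 2 y 1) = lp.single 2 (y : Fin n → ℤ) 1 := by
  ext x
  rw [hι]
  split_ifs with hx
  · subst hx
    rw [lp.single_apply_ne _ _ _ (Ne.symm y.2)]
  · by_cases hxy : x = y
    · subst hxy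
      simp
    · rw [lp.single_apply_ne _ _ _ hxy,
        lp.single_apply_ne _ _ _ (fun h => hxy (congrArg Subtype.val h))]

theorem adjoint_apply (hι : IsIota ι) (ψ : Kt n) (y : {x : Fin n → ℤ // x ≠ 0}) :
    adjoint ι ψ y = ψ y := by
  have h := adjoint_inner_right ι (lp.single 2 y 1) ψ
  simpa [lp.inner_single_left, hι.apply_single] using h

theorem apply_adjoint_apply (hι : IsIota ι) (ψ : Kt n) :
    ι (adjoint ι ψ) = ψ - ψ 0 • lp.single 2 0 1 := by
  ext x
  rw [hι]
  split_ifs with hx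
  all_goals rw [lp.coeFn_sub, Pi.sub_apply, lp.coeFn_smul, Pi.smul_apply, smul_eq_mul]
  · subst hx
    simp
  · rw [hι.adjoint_apply, lp.single_apply_ne _ _ _ hx, mul_zero, sub_zero]

theorem tendsto_apply_adjoint_sub {ψ : ℕ → Kt n} (hι : IsIota ι)
    (hweak : ∀ χ : Kt n, Tendsto (fun m => ⟪χ, ψ m⟫_ℂ) atTop (𝓝 0)) :
    Tendsto (fun m => ι (adjoint ι (ψ m)) - ψ m) atTop (𝓝 0) := by
  have h0 : Tendsto (fun m => ψ m 0) atTop (𝓝 0) := by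
    simpa only [lp.inner_single_left, RCLike.inner_apply, map_one, mul_one] using
      hweak (lp.single 2 0 1)
  have h := (h0.smul_const (lp.single 2 (0 : Fin n → ℤ) (1 : ℂ) : Kt n)).neg
  rw [zero_smul, neg_zero] at h
  refine h.congr fun m => ?_
  rw [hι.apply_adjoint_apply, sub_sub_cancel_left]

end IsIota

theorem stmt_6_general (n : ℕ) (μv : Fin n → ℂ) (V₀ : ℝ)
    (L : Fin n → (Kt n →L[ℂ] Kt n))
    (ι : Ks n →L[ℂ] Kt n) (hι : IsIota ι)
    (lam : ℝ) (ψseq : ℕ → Kt n)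
    (hnorm : ∀ m, ‖ψseq m‖ = 1)
    (hweak : ∀ ψ : Kt n, Tendsto (fun m => (inner ℂ ψ (ψseq m) : ℂ)) atTop (𝓝 0))
    (hWeyl : Tendsto (fun m => ‖T0op μv V₀ L (ψseq m) - (lam : ℂ) • ψseq m‖)
      atTop (𝓝 0)) :
    ∃ φseq : ℕ → Ks n,
      (∀ m, ‖φseq m‖ = 1) ∧
      (∀ φ : Ks n, Tendsto (fun m => (inner ℂ φ (φseq m) : ℂ)) atTop (𝓝 0)) ∧
      Tendsto (fun m => ‖Tops μv V₀ L ι (φseq m) - (lam : ℂ) • φseq m‖) atTop (𝓝 0) := by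
  have hψ : IsSingularWeylSeq (T0op μv V₀ L) (lam : ℂ) ψseq :=
    ⟨hnorm, hweak, tendsto_zero_iff_norm_tendsto_zero.2 hWeyl⟩
  obtain ⟨φseq, hφnorm, hφweak, hφWeyl⟩ :=
    hψ.exists_compression ι (hι.tendsto_apply_adjoint_sub hweak)
  exact ⟨φseq, hφnorm, hφweak, tendsto_zero_iff_norm_tendsto_zero.1 hφWeyl⟩

/-- a normalized weak-null Weyl sequence for `T̃₀` at `λ` yields a
normalized weak-null Weyl sequence for `T` at `λ`. -/
theorem stmt_6 (n : ℕ) (hn : 1 ≤ n) (μv : Fin n → ℂ) (V₀ : ℝ)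
    (L : Fin n → (Kt n →L[ℂ] Kt n)) (hL : IsShift L)
    (ι : Ks n →L[ℂ] Kt n) (hι : IsIota ι)
    (lam : ℝ) (ψseq : ℕ → Kt n)
    (hnorm : ∀ m, ‖ψseq m‖ = 1)
    (hweak : ∀ ψ : Kt n, Tendsto (fun m => (inner ℂ ψ (ψseq m) : ℂ)) atTop (𝓝 0))
    (hWeyl : Tendsto (fun m => ‖T0op μv V₀ L (ψseq m) - (lam : ℂ) • ψseq m‖)
      atTop (𝓝 0)) :
    ∃ φseq : ℕ → Ks n,
      (∀ m, ‖φseq m‖ = 1) ∧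
      (∀ φ : Ks n, Tendsto (fun m => (inner ℂ φ (φseq m) : ℂ)) atTop (𝓝 0)) ∧
      Tendsto (fun m => ‖Tops μv V₀ L ι (φseq m) - (lam : ℂ) • φseq m‖) atTop (𝓝 0) :=
  stmt_6_general n μv V₀ L ι hι lam ψseq hnorm hweak hWeyl
end
end

section
/- Let l ≥ 1, let ν_1,…,ν_l be strictly positive real numbers, and let ε ∈ (0, 2Σ_{j=1}^l ν_j]. Then the function k ↦ (Σ_{j=1}^l ν_j(1 − cos k_j) − ε/2)^{−2} is not Lebesgue integrable on [0,π)^l, i.e. ∫_{[0,π)^l} |Σ_{j=1}^l ν_j(1 − cos k_j) − ε/2|^{−2} dk = +∞; the same holds with (1 + cos k_j) in place of (1 − cos k_j). -/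
/-!
Split off the first coordinate. The resulting one-dimensional integrand is
`(c cos x + d)⁻²` with `|c| = ν₁`; whenever `|d| < |c|` it has a zero `x₀ ∈ (0, π)`, near which
`|c cos x + d| ≤ |c| |x - x₀|` because `cos` is 1-Lipschitz, so its integral diverges like
`∫₀ x⁻² dx`. The condition `|d| < |c|` is open in the remaining coordinates and holds at the
diagonal point `(t, …, t)` with `Σ νⱼ (1 ± cos t) = ε / 2`, so it holds on a set of positive
measure, and Tonelli gives `+∞`.
-/

open MeasureTheory
open scoped ENNReal Real

open Real Set

lemma abs_cos_lt_one_of_mem_Ioo {x : ℝ} (hx : x ∈ Ioo 0 π) : |cos x| < 1 := by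
  have := sin_pos_of_pos_of_lt_pi hx.1 hx.2
  rw [abs_lt]
  constructor <;> nlinarith [sin_sq_add_cos_sq x]

lemma exists_mem_Ioo_cos_eq {x : ℝ} (hx : |x| < 1) : ∃ t ∈ Ioo 0 π, cos t = x := by
  obtain ⟨h₁, h₂⟩ := abs_lt.1 hx
  exact ⟨arccos x, ⟨arccos_pos.2 h₂, arccos_lt_pi.2 h₁⟩, cos_arccos h₁.le h₂.le⟩

lemma setLIntegral_Ioo_inv_sq_sub_eq_top {a b : ℝ} (hab : a < b) :
    ∫⁻ t in Ioo a b, (ENNReal.ofReal (t - a) ^ 2)⁻¹ = ⊤ := by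
  have hrpow : ∀ t ∈ Ioo 0 (b - a), (ENNReal.ofReal t ^ 2)⁻¹ = ENNReal.ofReal (t ^ (-2 : ℝ)) :=
    fun t ht ↦ by
      rw [rpow_neg ht.1.le, rpow_two, ENNReal.ofReal_inv_of_pos (by nlinarith [ht.1]),
        ENNReal.ofReal_pow ht.1.le]
  have hshift := (measurePreserving_add_right volume a).setLIntegral_comp_preimage_emb
    (measurableEmbedding_addRight a) (fun t ↦ (ENNReal.ofReal (t - a) ^ 2)⁻¹) (Ioo a b)
  simp only [preimage_add_const_Ioo, sub_self, add_sub_cancel_right] at hshift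
  rw [← hshift, setLIntegral_congr_fun measurableSet_Ioo hrpow]
  by_contra hfin
  have hint := (lintegral_ofReal_ne_top_iff_integrable (by fun_prop)
    ((ae_restrict_iff' measurableSet_Ioo).2 (.of_forall fun t ht ↦ by
      simp only [Pi.zero_apply]; exact rpow_nonneg ht.1.le _))).1 hfin
  have := (intervalIntegral.integrableOn_Ioo_rpow_iff (sub_pos.2 hab)).1 hint
  norm_num at this

lemma setLIntegral_Ioo_inv_sq_eq_top_of_abs_le {f : ℝ → ℝ} {a b c : ℝ} (hab : a < b)
    (hf : ∀ t ∈ Ioo a b, |f t| ≤ c * (t - a)) :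
    ∫⁻ t in Ioo a b, (ENNReal.ofReal |f t| ^ 2)⁻¹ = ⊤ := by
  have hbound : ∀ t ∈ Ioo a b, (ENNReal.ofReal c ^ 2)⁻¹ * (ENNReal.ofReal (t - a) ^ 2)⁻¹ ≤
      (ENNReal.ofReal |f t| ^ 2)⁻¹ := fun t ht ↦ by
    rw [← ENNReal.mul_inv (.inr (by simp)) (.inl (by simp)), ← mul_pow,
      ← ENNReal.ofReal_mul' (sub_pos.2 ht.1).le]
    exact ENNReal.inv_le_inv.2 (pow_le_pow_left₀ zero_le (ENNReal.ofReal_le_ofReal (hf t ht)) 2)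
  refine top_unique (le_trans ?_ (setLIntegral_mono' measurableSet_Ioo hbound))
  rw [lintegral_const_mul _ (by fun_prop), setLIntegral_Ioo_inv_sq_sub_eq_top hab,
    ENNReal.mul_top (by simp)]

lemma setLIntegral_Ico_zero_pi_inv_sq_mul_cos_add_eq_top {c d : ℝ} (hd : |d| < |c|) :
    ∫⁻ t in Ico 0 π, (ENNReal.ofReal |c * cos t + d| ^ 2)⁻¹ = ⊤ := by
  have hc : c ≠ 0 := abs_pos.1 ((abs_nonneg d).trans_lt hd)
  obtain ⟨t₀, ht₀, hcos⟩ : ∃ t₀ ∈ Ioo 0 π, cos t₀ = -d / c :=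
    exists_mem_Ioo_cos_eq (by rwa [abs_div, abs_neg, div_lt_one (abs_pos.2 hc)])
  have hbound : ∀ t ∈ Ioo t₀ π, |c * cos t + d| ≤ |c| * (t - t₀) := fun t ht ↦ by
    have : c * cos t + d = c * (cos t - cos t₀) := by rw [hcos]; field_simp; ring
    rw [this, abs_mul, ← abs_of_pos (sub_pos.2 ht.1)]
    exact mul_le_mul_of_nonneg_left (abs_cos_sub_cos_le t t₀) (abs_nonneg c)
  refine top_unique ((setLIntegral_Ioo_inv_sq_eq_top_of_abs_le ht₀.2 hbound).ge.trans ?_)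
  exact lintegral_mono_set fun t ht ↦ ⟨ht₀.1.le.trans ht.1.le, ht.2⟩

lemma setLIntegral_univ_pi_eq_top_of_fibers {α : Type*} [MeasureSpace α]
    [SigmaFinite (volume : Measure α)] {n : ℕ} {g : (Fin (n + 1) → α) → ℝ≥0∞} (hg : Measurable g)
    {S : Set α} {U : Set (Fin n → α)} (hUS : U ⊆ univ.pi fun _ ↦ S) (hU : MeasurableSet U)
    (hU₀ : volume U ≠ 0) (hfib : ∀ y ∈ U, ∫⁻ x in S, g (Fin.cons x y) = ⊤) :
    ∫⁻ k in univ.pi fun _ ↦ S, g k = ⊤ := by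
  set e := MeasurableEquiv.piFinSuccAbove (fun _ : Fin (n + 1) ↦ α) 0
  have he : ∀ x y, e.symm (x, y) = Fin.cons x y := fun x y ↦ by
    simp [e, MeasurableEquiv.piFinSuccAbove, Fin.insertNthEquiv_zero, Fin.consEquiv]
  have hpre : e.symm ⁻¹' (univ.pi fun _ ↦ S) = S ×ˢ univ.pi fun _ ↦ S := by
    ext ⟨x, y⟩
    simp [he, Fin.forall_fin_succ]
  rw [← (volume_preserving_piFinSuccAbove (fun _ ↦ α) 0).symm.setLIntegral_comp_preimage_emb
    e.symm.measurableEmbedding, hpre, Measure.volume_eq_prod, ← Measure.prod_restrict,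
    lintegral_prod_symm' (fun z ↦ g (e.symm z)) (hg.comp e.symm.measurable)]
  refine top_unique ((le_of_eq ?_).trans (lintegral_mono_set hUS))
  calc ⊤ = ∫⁻ _ in U, ⊤ ∂volume := by
        rw [setLIntegral_const, ENNReal.top_mul hU₀]
    _ = ∫⁻ y in U, ∫⁻ x in S, g (e.symm (x, y)) ∂volume :=
        setLIntegral_congr_fun hU fun y hy ↦ by simp only [he, hfib y hy]

lemma setLIntegral_Ico_pi_inv_sq_mul_cos_add_eq_top {n : ℕ} {c : ℝ} (hc : c ≠ 0)
    {f : (Fin n → ℝ) → ℝ} (hf : Continuous f) {x₀ : ℝ} (hx₀ : x₀ ∈ Ioo 0 π)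
    {y₀ : Fin n → ℝ} (hy₀ : y₀ ∈ univ.pi fun _ ↦ Ioo 0 π) (h₀ : c * cos x₀ + f y₀ = 0) :
    ∫⁻ k in univ.pi fun _ ↦ Ico 0 π,
      (ENNReal.ofReal |c * cos (k 0) + f (Fin.tail k)| ^ 2)⁻¹ = ⊤ := by
  set U := (univ.pi fun _ ↦ Ioo 0 π) ∩ {y | |f y| < |c|}
  have hU : IsOpen U :=
    (isOpen_set_pi finite_univ fun _ _ ↦ isOpen_Ioo).inter (isOpen_lt (by fun_prop) continuous_const)
  have hy₀U : y₀ ∈ U := by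
    refine ⟨hy₀, show |f y₀| < |c| from ?_⟩
    rw [eq_neg_of_add_eq_zero_right h₀, abs_neg, abs_mul]
    exact mul_lt_of_lt_one_right (abs_pos.2 hc) (abs_cos_lt_one_of_mem_Ioo hx₀)
  have hmeas := hf.measurable
  refine setLIntegral_univ_pi_eq_top_of_fibers (by fun_prop)
    (fun y hy j _ ↦ Ioo_subset_Ico_self (hy.1 j trivial)) hU.measurableSet
    (hU.measure_ne_zero volume ⟨y₀, hy₀U⟩) fun y hy ↦ ?_
  simpa only [Fin.cons_zero, Fin.tail_cons] using
    setLIntegral_Ico_zero_pi_inv_sq_mul_cos_add_eq_top hy.2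

lemma setLIntegral_Ico_pi_inv_sq_sum_one_add_mul_cos_sub_eq_top {n : ℕ} {ν : Fin (n + 1) → ℝ}
    (hν : ∀ j, 0 < ν j) {s : ℝ} (hs : |s| = 1) {ε : ℝ} (hε : ε ∈ Ioc 0 (2 * ∑ j, ν j)) :
    ∫⁻ k in univ.pi fun _ ↦ Ico 0 π,
      (ENNReal.ofReal |∑ j, ν j * (1 + s * cos (k j)) - ε / 2| ^ 2)⁻¹ = ⊤ := by
  set f : (Fin n → ℝ) → ℝ := fun y ↦ ν 0 + ∑ i, ν i.succ * (1 + s * cos (y i)) - ε / 2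
  have hsplit (k : Fin (n + 1) → ℝ) :
      ∑ j, ν j * (1 + s * cos (k j)) - ε / 2 = s * ν 0 * cos (k 0) + f (Fin.tail k) := by
    simp only [f, Fin.sum_univ_succ, Fin.tail]
    ring
  have hsum : 0 < ∑ j, ν j := Finset.sum_pos (fun j _ ↦ hν j) Finset.univ_nonempty
  have hss : s * s = 1 := by rw [← abs_mul_abs_self, hs, one_mul]
  set w := ε / (2 * ∑ j, ν j)
  have hw : w ∈ Ioc 0 1 := ⟨by have := hε.1; positivity, (div_le_one (by positivity)).2 hε.2⟩
  obtain ⟨t, ht, hcos⟩ := exists_mem_Ioo_cos_eq (x := s * (w - 1)) (by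
    rw [abs_mul, hs, one_mul, abs_lt]
    constructor <;> linarith [hw.1, hw.2])
  have hzero : ∑ j, ν j * (1 + s * cos t) - ε / 2 = 0 := by
    rw [← Finset.sum_mul, hcos, ← mul_assoc, hss, one_mul, add_sub_cancel, sub_eq_zero]
    simp only [w]
    field_simp
  simp_rw [hsplit]
  exact setLIntegral_Ico_pi_inv_sq_mul_cos_add_eq_top
    (mul_ne_zero (by rintro rfl; simp at hs) (hν 0).ne') (by fun_prop) ht
    (y₀ := fun _ ↦ t) (fun _ _ ↦ ht) ((hsplit fun _ ↦ t).symm.trans hzero)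

/-- for positive `ν₁,…,ν_l` and `ε ∈ (0, 2Σνⱼ]`, the function
`k ↦ (Σⱼ νⱼ(1 ∓ cos kⱼ) - ε/2)⁻²` is not Lebesgue integrable on `[0,π)^l`. -/
theorem stmt_11 (l : ℕ) (hl : 1 ≤ l) (ν : Fin l → ℝ) (hν : ∀ j, 0 < ν j)
    (ε : ℝ) (hε : ε ∈ Set.Ioc 0 (2 * ∑ j, ν j)) :
    (∫⁻ k in Set.pi Set.univ (fun _ : Fin l => Set.Ico (0 : ℝ) π),
        ((ENNReal.ofReal |∑ j, ν j * (1 - Real.cos (k j)) - ε / 2|) ^ 2)⁻¹ = ⊤) ∧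
    (∫⁻ k in Set.pi Set.univ (fun _ : Fin l => Set.Ico (0 : ℝ) π),
        ((ENNReal.ofReal |∑ j, ν j * (1 + Real.cos (k j)) - ε / 2|) ^ 2)⁻¹ = ⊤) := by
  obtain ⟨n, rfl⟩ := Nat.exists_eq_add_of_le' hl
  constructor
  · simpa only [neg_one_mul, ← sub_eq_add_neg] using
      setLIntegral_Ico_pi_inv_sq_sum_one_add_mul_cos_sub_eq_top hν (s := -1) (by simp) hε
  · simpa only [one_mul] using
      setLIntegral_Ico_pi_inv_sq_sum_one_add_mul_cos_sub_eq_top hν (s := 1) (by simp) hε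
end

section
/- Assume μ ≠ 0 and let λ ∈ (V₀ − 2μ, V₀ + 2μ). Then the function k ↦ ( 2Σ_{j=1}^n |μ_j| cos k_j + V₀ − λ )^{−1} is not square-integrable on [0,2π)ⁿ: ∫_{[0,2π)^n} | 2Σ_{j=1}^n |μ_j| cos k_j + V₀ − λ |^{−2} dk = +∞. -/
/-!
Write `f k = 2 ∑ aⱼ cos kⱼ + c` with `c = V₀ - λ`, so that `|c| < 2 ∑ aⱼ`. Pick `i` with `aᵢ > 0`
and integrate first in `kᵢ` (Tonelli). For all other coordinates `y` in an open set meeting the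
interior of the cube, the slice `u ↦ f` has a zero `s ∈ [0, π]` (an arccosine), and being
Lipschitz it satisfies `|f| ≤ L (u - s)`. Hence `f⁻² ≥ C (u - s)⁻¹` just right of `s`, and
`(u - s)⁻¹` is not integrable there: the inner integral is `∞` on a set of positive measure.
-/

open MeasureTheory Set
open scoped ENNReal NNReal Real

theorem setLIntegral_Ioo_ofReal_inv_sub_eq_top {s b : ℝ} (h : s < b) :
    ∫⁻ u in Ioo s b, ENNReal.ofReal (u - s)⁻¹ = ⊤ := by
  by_contra hfin
  have hint : IntegrableOn (fun u => (u - s)⁻¹) (Ioo s b) :=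
    (lintegral_ofReal_ne_top_iff_integrable (by fun_prop)
      (ae_restrict_of_forall_mem measurableSet_Ioo fun u hu =>
        inv_nonneg.2 (sub_nonneg.2 hu.1.le))).1 hfin
  have := (intervalIntegrable_iff_integrableOn_Ioo_of_le h.le).2 hint
  simp [h.ne] at this

theorem setLIntegral_Ico_inv_sq_eq_top_of_lipschitzWith {g : ℝ → ℝ} {L : ℝ≥0}
    (hg : LipschitzWith L g) {a b s : ℝ} (hs : s ∈ Ico a b) (hgs : g s = 0) :
    ∫⁻ u in Ico a b, (ENNReal.ofReal |g u| ^ 2)⁻¹ = ⊤ := by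
  set C : ℝ := (((L : ℝ) + 1) ^ 2 * (b - s))⁻¹
  -- `L + 1` rather than `L`, since for `L = 0` the constant would be `0⁻¹ = 0`
  have hC : 0 < C := by have := sub_pos.2 hs.2; positivity
  have hbound : ∀ u ∈ Ioo s b,
      ENNReal.ofReal C * ENNReal.ofReal (u - s)⁻¹ ≤ (ENNReal.ofReal |g u| ^ 2)⁻¹ := by
    intro u hu
    have hus : 0 < u - s := sub_pos.2 hu.1
    have hgu : |g u| ≤ (L + 1) * (u - s) := by
      have := hg.dist_le_mul u s
      rw [Real.dist_eq, Real.dist_eq, hgs, sub_zero, abs_of_pos hus] at this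
      nlinarith
    have hreal : C * (u - s)⁻¹ ≤ (((L + 1) * (u - s)) ^ 2)⁻¹ := by
      rw [← mul_inv]
      refine inv_anti₀ (by positivity) ?_
      have : u - s ≤ b - s := by linarith [hu.2]
      nlinarith [mul_pos (by positivity : (0:ℝ) < ((L:ℝ) + 1) ^ 2) hus]
    rw [← ENNReal.ofReal_mul hC.le, ← ENNReal.ofReal_pow (abs_nonneg _)]
    calc ENNReal.ofReal (C * (u - s)⁻¹)
        ≤ ENNReal.ofReal ((((L + 1) * (u - s)) ^ 2)⁻¹) := ENNReal.ofReal_le_ofReal hreal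
      _ = (ENNReal.ofReal (((L + 1) * (u - s)) ^ 2))⁻¹ := ENNReal.ofReal_inv_of_pos (by positivity)
      _ ≤ (ENNReal.ofReal (|g u| ^ 2))⁻¹ :=
        ENNReal.inv_le_inv.2 (ENNReal.ofReal_le_ofReal (pow_le_pow_left₀ (abs_nonneg _) hgu 2))
  refine eq_top_iff.2 ?_
  calc ⊤ = ENNReal.ofReal C * ∫⁻ u in Ioo s b, ENNReal.ofReal (u - s)⁻¹ := by
        rw [setLIntegral_Ioo_ofReal_inv_sub_eq_top hs.2, ENNReal.mul_top (by simpa using hC)]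
    _ = ∫⁻ u in Ioo s b, ENNReal.ofReal C * ENNReal.ofReal (u - s)⁻¹ :=
        (lintegral_const_mul' _ _ ENNReal.ofReal_ne_top).symm
    _ ≤ ∫⁻ u in Ioo s b, (ENNReal.ofReal |g u| ^ 2)⁻¹ := setLIntegral_mono' measurableSet_Ioo hbound
    _ ≤ ∫⁻ u in Ico a b, (ENNReal.ofReal |g u| ^ 2)⁻¹ :=
        lintegral_mono_set fun u hu => ⟨hs.1.trans hu.1.le, hu.2⟩

theorem lintegral_pi_eq_top_of_measure_slices_ne_zero {α : Type*} [MeasurableSpace α] {m : ℕ}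
    (μ : Fin (m + 1) → Measure α) [∀ i, SigmaFinite (μ i)] (i : Fin (m + 1))
    {F : (Fin (m + 1) → α) → ℝ≥0∞} (hF : Measurable F)
    (h : Measure.pi (fun j => μ (i.succAbove j)) {y | ∫⁻ u, F (i.insertNth u y) ∂μ i = ⊤} ≠ 0) :
    ∫⁻ x, F x ∂Measure.pi μ = ⊤ := by
  have e := (measurePreserving_piFinSuccAbove μ i).symm
  rw [e.lintegral_map_equiv]
  exact (lintegral_prod_symm' _ (hF.comp e.measurable)).trans
    (lintegral_eq_top_of_measure_eq_top_ne_zero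
      (hF.comp e.measurable).lintegral_prod_left'.aemeasurable h)

theorem pi_restrict_Ico_ne_zero_of_isOpen {ι : Type*} [Fintype ι] {a b : ℝ}
    {U : Set (ι → ℝ)} (hU : IsOpen U) {x : ι → ℝ} (hxU : x ∈ U) (hx : ∀ i, x i ∈ Ioo a b) :
    Measure.pi (fun _ : ι => volume.restrict (Ico a b)) U ≠ 0 := by
  rw [← Measure.restrict_pi_pi, ← volume_pi, Measure.restrict_apply hU.measurableSet]
  refine (lt_of_lt_of_le ?_ (measure_mono (inter_subset_inter_right _
    (pi_mono fun _ _ => Ioo_subset_Ico_self)))).ne'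
  exact (hU.inter (isOpen_set_pi finite_univ fun _ _ => isOpen_Ioo)).measure_pos volume
    ⟨x, hxU, fun i _ => hx i⟩

theorem exists_mem_Icc_two_mul_cos_add_eq_zero {α E : ℝ} (hα : 0 < α) (hE : |E| ≤ 2 * α) :
    ∃ t ∈ Icc 0 π, 2 * α * Real.cos t + E = 0 := by
  obtain ⟨hE₁, hE₂⟩ := abs_le.1 hE
  refine ⟨Real.arccos (-E / (2 * α)), ⟨Real.arccos_nonneg _, Real.arccos_le_pi _⟩, ?_⟩
  rw [Real.cos_arccos (by rw [le_div_iff₀ (by positivity)]; linarith)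
    (by rw [div_le_iff₀ (by positivity)]; linarith)]
  field_simp
  ring

theorem exists_mem_Ioo_two_mul_cos_add_eq_zero {α E : ℝ} (hE : |E| < 2 * α) :
    ∃ t ∈ Ioo 0 π, 2 * α * Real.cos t + E = 0 := by
  have hα : 0 < α := by linarith [abs_nonneg E]
  obtain ⟨t, ⟨ht₀, htπ⟩, hzero⟩ := exists_mem_Icc_two_mul_cos_add_eq_zero hα hE.le
  obtain ⟨hE₁, hE₂⟩ := abs_lt.1 hE
  refine ⟨t, ⟨ht₀.lt_of_ne ?_, htπ.lt_of_ne ?_⟩, hzero⟩ <;> rintro rfl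
  · rw [Real.cos_zero] at hzero; linarith
  · rw [Real.cos_pi] at hzero; linarith

theorem setLIntegral_Ico_inv_sq_two_mul_cos_add_eq_top {α E : ℝ} (hα : 0 < α)
    (hE : |E| ≤ 2 * α) :
    ∫⁻ u in Ico 0 (2 * π), (ENNReal.ofReal |2 * α * Real.cos u + E| ^ 2)⁻¹ = ⊤ := by
  obtain ⟨t, ⟨ht₀, htπ⟩, hzero⟩ := exists_mem_Icc_two_mul_cos_add_eq_zero hα hE
  have hlip : LipschitzWith (‖2 * α‖₊ * 1 + 0) fun u => 2 * α * Real.cos u + E :=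
    ((lipschitzWith_smul (2 * α)).comp Real.lipschitzWith_cos).add (LipschitzWith.const E)
  exact setLIntegral_Ico_inv_sq_eq_top_of_lipschitzWith hlip
    ⟨ht₀, htπ.trans_lt (by linarith [Real.pi_pos])⟩ hzero

theorem setLIntegral_pi_Ico_inv_sq_two_mul_sum_cos_add_eq_top {m : ℕ} (a : Fin (m + 1) → ℝ)
    {i : Fin (m + 1)} (hi : 0 < a i) {c : ℝ} (hc : |c| < 2 * ∑ j, a j) :
    ∫⁻ k in univ.pi fun _ => Ico 0 (2 * π),
      (ENNReal.ofReal |2 * ∑ j, a j * Real.cos (k j) + c| ^ 2)⁻¹ = ⊤ := by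
  obtain ⟨t, ht, hct⟩ := exists_mem_Ioo_two_mul_cos_add_eq_zero hc
  set U := {y : Fin m → ℝ | |2 * ∑ j, a (i.succAbove j) * Real.cos (y j) + c| < 2 * a i}
  have hU : IsOpen U := isOpen_lt (by fun_prop) continuous_const
  have htU : (fun _ => t) ∈ U := by
    have hsum := Fin.sum_univ_succAbove a i
    have hsin := Real.sin_pos_of_pos_of_lt_pi ht.1 ht.2
    have hcos : |Real.cos t| < 1 := by
      rw [abs_lt]; constructor <;> nlinarith [Real.sin_sq_add_cos_sq t]
    have hval : 2 * ∑ j, a (i.succAbove j) * Real.cos t + c = -(2 * a i * Real.cos t) := by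
      rw [← Finset.sum_mul]
      linear_combination (2 * Real.cos t) * hsum.symm + hct
    show |2 * ∑ j, a (i.succAbove j) * Real.cos t + c| < 2 * a i
    rw [hval, abs_neg, abs_mul, abs_of_pos (by positivity : 0 < 2 * a i)]
    nlinarith
  rw [volume_pi, Measure.restrict_pi_pi]
  refine lintegral_pi_eq_top_of_measure_slices_ne_zero _ i (by fun_prop) fun h0 =>
    pi_restrict_Ico_ne_zero_of_isOpen hU htU
      (fun _ => ⟨ht.1, ht.2.trans (by linarith [Real.pi_pos])⟩) (measure_mono_null ?_ h0)
  intro y hy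
  simp only [Fin.sum_univ_succAbove _ i, Fin.insertNth_apply_same,
    Fin.insertNth_apply_succAbove, mul_add, add_assoc, ← mul_assoc]
  exact setLIntegral_Ico_inv_sq_two_mul_cos_add_eq_top hi hy.le

/-- if `μ ≠ 0` and `λ ∈ (V₀ - 2μ, V₀ + 2μ)`, then
`k ↦ (2Σⱼ|μⱼ|cos kⱼ + V₀ - λ)⁻¹` is not square-integrable on `[0,2π)ⁿ`. -/
theorem stmt_12 (n : ℕ) (hn : 1 ≤ n) (μv : Fin n → ℂ) (V₀ : ℝ)
    (hμ : (∑ j, ‖μv j‖) ≠ 0)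
    (lam : ℝ)
    (hlam : lam ∈ Set.Ioo (V₀ - 2 * ∑ j, ‖μv j‖)
                          (V₀ + 2 * ∑ j, ‖μv j‖)) :
    ∫⁻ k in Set.pi Set.univ (fun _ : Fin n => Set.Ico (0 : ℝ) (2 * π)),
        ((ENNReal.ofReal
          |2 * ∑ j, ‖μv j‖ * Real.cos (k j) + V₀ - lam|) ^ 2)⁻¹ = ⊤ := by
  obtain ⟨m, rfl⟩ := Nat.exists_eq_add_of_le' hn
  obtain ⟨i, -, hi⟩ := Finset.exists_ne_zero_of_sum_ne_zero hμ
  have hc : |V₀ - lam| < 2 * ∑ j, ‖μv j‖ :=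
    abs_sub_lt_iff.2 ⟨by linarith [hlam.1], by linarith [hlam.2]⟩
  simpa only [add_sub_assoc] using
    setLIntegral_pi_Ico_inv_sq_two_mul_sum_cos_add_eq_top (fun j => ‖μv j‖)
      ((norm_nonneg _).lt_of_ne' hi) hc
end

section
/- Assume μ ≠ 0. If λ ∈ ℝ is an eigenvalue of T (i.e., Tφ = λφ for some nonzero φ ∈ 𝒦), then λ lies in the open interval (V₀ − 2μ, V₀ + 2μ). -/
open MeasureTheory Filter Topology ComplexConjugate ContinuousLinearMap
open scoped ENNReal Real

noncomputable section

/-! With `ψ = ι φ`, the eigenvalue equation gives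
`λ ‖ψ‖² = Re ⟪ψ, T̃₀ ψ⟫ = V₀ ‖ψ‖² + 2 ∑ⱼ Re (μⱼ ⟪ψ, Lⱼ ψ⟫)`.
Each shift is unitary, so `|⟪ψ, Lⱼ ψ⟫| ≤ ‖ψ‖²` by Cauchy–Schwarz, and equality would force
`Lⱼ ψ = r ψ` with `|r| = 1`: then `|ψ|` is periodic in the direction `eⱼ`, which no nonzero
`ℓ²` function is. Hence the inequality is strict, and since some `μⱼ ≠ 0`,
`|λ - V₀| ‖ψ‖² < 2 μ ‖ψ‖²`. -/

open Function Complex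

local notation "⟪" x ", " y "⟫" => @inner ℂ _ _ x y

theorem Summable.eq_zero_of_periodic {G α : Type*} [AddLeftCancelMonoid G] [UniformSpace α]
    [AddCommGroup α] [IsUniformAddGroup α] [CompleteSpace α] [T2Space α] {f : G → α}
    (hf : Summable f) {v : G} (hper : Periodic f v) (hv : ¬IsOfFinAddOrder v) : f = 0 := by
  funext x
  have hinj : Injective fun k : ℕ => x + k • v :=
    (add_right_injective x).comp (injective_nsmul_iff_not_isOfFinAddOrder.mpr hv)
  have hconst : Summable fun _ : ℕ => f x :=
    (hf.comp_injective hinj).congr fun k => hper.nsmul k x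
  exact (summable_const_iff _).mp hconst

theorem lp.eq_zero_of_periodic_norm {G E : Type*} [AddLeftCancelMonoid G] [NormedAddCommGroup E]
    {p : ℝ≥0∞} (hp : 0 < p.toReal) (ψ : lp (fun _ : G => E) p) {v : G}
    (hper : Periodic (fun x => ‖ψ x‖) v) (hv : ¬IsOfFinAddOrder v) : ψ = 0 := by
  have h := ((lp.memℓp ψ).summable hp).eq_zero_of_periodic
    (fun x => congrArg (· ^ p.toReal) (hper x)) hv
  ext x
  have hx := congrFun h x
  simp only [Pi.zero_apply] at hx
  simpa using (Real.rpow_eq_zero (norm_nonneg _) hp.ne').mp hx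

theorem not_isOfFinAddOrder_single_one {ι : Type*} [DecidableEq ι] (j : ι) :
    ¬IsOfFinAddOrder (Pi.single j 1 : ι → ℤ) := by
  refine injective_nsmul_iff_not_isOfFinAddOrder.mp fun k l hkl => ?_
  simpa using congrFun hkl j

theorem abs_sum_re_mul_lt {ι : Type*} [Fintype ι] {μ a : ι → ℂ} {N : ℝ}
    (ha : ∀ j, ‖a j‖ < N) (hμ : ∃ j, μ j ≠ 0) :
    |∑ j, (μ j * a j).re| < (∑ j, ‖μ j‖) * N := by
  obtain ⟨j₀, hj₀⟩ := hμ
  calc |∑ j, (μ j * a j).re| ≤ ∑ j, ‖μ j‖ * ‖a j‖ := by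
        refine (Finset.abs_sum_le_sum_abs _ _).trans (Finset.sum_le_sum fun j _ => ?_)
        exact (abs_re_le_norm _).trans (norm_mul _ _).le
    _ < ∑ j, ‖μ j‖ * N :=
        Finset.sum_lt_sum (fun j _ => mul_le_mul_of_nonneg_left (ha j).le (norm_nonneg _))
          ⟨j₀, Finset.mem_univ _, mul_lt_mul_of_pos_left (ha j₀) (norm_pos_iff.mpr hj₀)⟩
    _ = (∑ j, ‖μ j‖) * N := (Finset.sum_mul _ _ _).symm

theorem re_inner_T0op_apply {n : ℕ} (μv : Fin n → ℂ) (V₀ : ℝ) (L : Fin n → (Kt n →L[ℂ] Kt n))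
    (ψ : Kt n) :
    (⟪ψ, T0op μv V₀ L ψ⟫).re = 2 * ∑ j, (μv j * ⟪ψ, L j ψ⟫).re + V₀ * ‖ψ‖ ^ 2 := by
  have hadj (j : Fin n) : ⟪ψ, adjoint (L j) ψ⟫ = conj ⟪ψ, L j ψ⟫ := by
    rw [adjoint_inner_right, inner_conj_symm]
  simp only [T0op, add_apply, sum_apply, smul_apply, id_apply, inner_add_right, inner_sum,
    inner_smul_right, hadj, ← map_mul, add_conj, add_re, re_sum, ofReal_re, re_ofReal_mul,
    ← Finset.mul_sum]
  exact congrArg (_ + V₀ * ·) (@inner_self_eq_norm_sq ℂ _ _ _ _ ψ)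

namespace IsIota

variable {n : ℕ} {ι : Ks n →L[ℂ] Kt n}

theorem inner_map_map (hι : IsIota ι) (φ χ : Ks n) : ⟪ι φ, ι χ⟫ = ⟪φ, χ⟫ := by
  rw [lp.inner_eq_tsum, lp.inner_eq_tsum]
  have hsupp : support (fun x : Fin n → ℤ => ⟪(ι φ) x, (ι χ) x⟫) ⊆ {x | x ≠ 0} := by
    intro x hx h0
    apply hx
    simp [hι φ x, hι χ x, h0]
  rw [← tsum_subtype_eq_of_support_subset hsupp]
  refine (tsum_congr fun ⟨x, hx⟩ => ?_).symm
  simp [hι φ x, hι χ x, show x ≠ 0 from hx]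

theorem norm_map (hι : IsIota ι) (φ : Ks n) : ‖ι φ‖ = ‖φ‖ := by
  rw [@norm_eq_sqrt_re_inner ℂ, @norm_eq_sqrt_re_inner ℂ _ _ _ _ φ, hι.inner_map_map]

end IsIota

namespace IsShift

variable {n : ℕ} {L : Fin n → (Kt n →L[ℂ] Kt n)}

theorem norm_apply (hL : IsShift L) (j : Fin n) (ψ : Kt n) : ‖L j ψ‖ = ‖ψ‖ := by
  have h : ∑' x, ⟪L j ψ x, L j ψ x⟫ = ∑' x, ⟪ψ x, ψ x⟫ := by
    rw [← (Equiv.addRight (Pi.single j 1)).tsum_eq fun x => ⟪ψ x, ψ x⟫]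
    simp only [hL j ψ, Equiv.coe_addRight]
  rw [@norm_eq_sqrt_re_inner ℂ, @norm_eq_sqrt_re_inner ℂ _ _ _ _ ψ, lp.inner_eq_tsum,
    lp.inner_eq_tsum, h]

theorem norm_inner_lt (hL : IsShift L) (j : Fin n) {ψ : Kt n} (hψ : ψ ≠ 0) :
    ‖⟪ψ, L j ψ⟫‖ < ‖ψ‖ ^ 2 := by
  have hLψ : L j ψ ≠ 0 := by rwa [← norm_ne_zero_iff, hL.norm_apply, norm_ne_zero_iff]
  have hle : ‖⟪ψ, L j ψ⟫‖ ≤ ‖ψ‖ ^ 2 := by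
    simpa only [hL.norm_apply, sq] using norm_inner_le_norm (𝕜 := ℂ) ψ (L j ψ)
  refine hle.lt_of_ne fun heq => hψ ?_
  obtain ⟨r, -, hr⟩ := (norm_inner_eq_norm_iff hψ hLψ).mp (by rw [heq, hL.norm_apply, sq])
  have hr1 : ‖r‖ = 1 := by
    have h := hL.norm_apply j ψ
    rw [hr, norm_smul] at h
    exact (mul_eq_right₀ (norm_ne_zero_iff.mpr hψ)).mp h
  refine lp.eq_zero_of_periodic_norm (by norm_num) ψ (fun x => ?_)
    (not_isOfFinAddOrder_single_one j)
  have h := congrArg (fun f : Kt n => ‖f x‖) hr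
  simpa [hL j ψ x, hr1] using h

theorem abs_re_inner_T0op_sub_lt (hL : IsShift L) {μv : Fin n → ℂ} (hμ : (∑ j, ‖μv j‖) ≠ 0)
    (V₀ : ℝ) {ψ : Kt n} (hψ : ψ ≠ 0) :
    |(⟪ψ, T0op μv V₀ L ψ⟫).re - V₀ * ‖ψ‖ ^ 2| < 2 * (∑ j, ‖μv j‖) * ‖ψ‖ ^ 2 := by
  obtain ⟨j, -, hj⟩ := Finset.exists_ne_zero_of_sum_ne_zero hμ
  rw [re_inner_T0op_apply, add_sub_cancel_right, abs_mul, abs_two, mul_assoc]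
  exact mul_lt_mul_of_pos_left
    (abs_sum_re_mul_lt (fun j => hL.norm_inner_lt j hψ) ⟨j, norm_ne_zero_iff.mp hj⟩) two_pos

end IsShift

theorem stmt_17_general (n : ℕ) (μv : Fin n → ℂ) (V₀ : ℝ)
    (hμ : (∑ j, ‖μv j‖) ≠ 0)
    (L : Fin n → (Kt n →L[ℂ] Kt n)) (hL : IsShift L)
    (ι : Ks n →L[ℂ] Kt n) (hι : IsIota ι)
    (lam : ℝ) (φ : Ks n) (hφ : φ ≠ 0)
    (heig : Tops μv V₀ L ι φ = (lam : ℂ) • φ) :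
    lam ∈ Set.Ioo (V₀ - 2 * ∑ j, ‖μv j‖)
                  (V₀ + 2 * ∑ j, ‖μv j‖) := by
  have hφ_sq : 0 < ‖φ‖ ^ 2 := by positivity
  have hψ : ι φ ≠ 0 := by rwa [← norm_ne_zero_iff, hι.norm_map, norm_ne_zero_iff]
  have hrayleigh : (⟪ι φ, T0op μv V₀ L (ι φ)⟫).re = lam * ‖φ‖ ^ 2 := by
    have hT : ⟪φ, Tops μv V₀ L ι φ⟫ = ⟪ι φ, T0op μv V₀ L (ι φ)⟫ := adjoint_inner_right ι _ _
    rw [← hT, heig, inner_smul_right, @inner_self_eq_norm_sq_to_K ℂ]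
    simp [sq]
  have h := hL.abs_re_inner_T0op_sub_lt hμ V₀ hψ
  rw [hrayleigh, hι.norm_map, ← sub_mul, abs_mul, abs_of_pos hφ_sq] at h
  have := abs_lt.mp (lt_of_mul_lt_mul_right h hφ_sq.le)
  constructor <;> linarith

/-- if `μ ≠ 0` and `λ ∈ ℝ` is an eigenvalue of `T`, then
`λ ∈ (V₀ - 2μ, V₀ + 2μ)`. -/
theorem stmt_17 (n : ℕ) (hn : 1 ≤ n) (μv : Fin n → ℂ) (V₀ : ℝ)
    (hμ : (∑ j, ‖μv j‖) ≠ 0)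
    (L : Fin n → (Kt n →L[ℂ] Kt n)) (hL : IsShift L)
    (ι : Ks n →L[ℂ] Kt n) (hι : IsIota ι)
    (lam : ℝ) (φ : Ks n) (hφ : φ ≠ 0)
    (heig : Tops μv V₀ L ι φ = (lam : ℂ) • φ) :
    lam ∈ Set.Ioo (V₀ - 2 * ∑ j, ‖μv j‖)
                  (V₀ + 2 * ∑ j, ‖μv j‖) :=
  stmt_17_general n μv V₀ hμ L hL ι hι lam φ hφ heig
end
end
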